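/- Let a,b,c,d be real numbers with c ≠ 0, ad − bc ≠ 0, and Δ = (d−a)² + 4bc = 0. Let M be the Möbius transformation of ℝ ∪ {∞} extending t ↦ (at+b)/(ct+d). Then t₀ = (a−d)/(2c) is the unique fixed point of M in ℝ ∪ {∞}, and for every t ∈ ℝ ∪ {∞} the sequence of iterates Mⁿ(t) converges to t₀ in the topology of the one-point compactification. -/

import Mathlib

open OnePoint Filter Topology

/-- The Möbius transformation `t ↦ (a t + b)/(c t + d)` extended to the one-point
compactification `ℝ ∪ {∞}`, with `M(-d/c) = ∞` and `M(∞) = a/c`. -/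
noncomputable def mobius (a b c d : ℝ) (p : OnePoint ℝ) : OnePoint ℝ :=
  match p with
  | Option.none => ((a / c : ℝ) : OnePoint ℝ)
  | Option.some t =>
      if c * t + d = 0 then (∞ : OnePoint ℝ)
      else (((a * t + b) / (c * t + d) : ℝ) : OnePoint ℝ)

/-!
When `Δ = 0` the trace `a + d` is nonzero (since `(a + d)² = 4 (ad - bc)`), and `M` is parabolic:
in the coordinate `v ↦ t₀ + 1/v` (sending `v = 0` to `∞`) it becomes the translation
`v ↦ v + 2c/(a + d)`. Every point other than `t₀` has such a coordinate, so its orbit is an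
arithmetic progression `v + n k` with `k ≠ 0`, which escapes to infinity, i.e. `Mⁿ(t) → t₀`;
and a nontrivial translation has no fixed points.
-/

open Bornology Function

noncomputable def parabolicChart (t₀ v : ℝ) : OnePoint ℝ :=
  if v = 0 then ∞ else ↑(t₀ + v⁻¹)

theorem parabolicChart_zero (t₀ : ℝ) : parabolicChart t₀ 0 = ∞ := if_pos rfl

theorem parabolicChart_of_ne_zero (t₀ : ℝ) {v : ℝ} (hv : v ≠ 0) :
    parabolicChart t₀ v = ↑(t₀ + v⁻¹) := if_neg hv

theorem parabolicChart_injective (t₀ : ℝ) : Injective (parabolicChart t₀) := by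
  intro v w h
  by_cases hv : v = 0 <;> by_cases hw : w = 0
  · rw [hv, hw]
  · simp [parabolicChart, hv, hw] at h
  · simp [parabolicChart, hv, hw] at h
  · simpa [parabolicChart, hv, hw] using h

theorem exists_parabolicChart_eq {t₀ : ℝ} {q : OnePoint ℝ} (hq : q ≠ ↑t₀) :
    ∃ v, parabolicChart t₀ v = q := by
  induction q using OnePoint.rec with
  | infty => exact ⟨0, parabolicChart_zero t₀⟩
  | coe t =>
    have ht : t - t₀ ≠ 0 := sub_ne_zero.mpr (by simpa using hq)
    refine ⟨(t - t₀)⁻¹, ?_⟩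
    rw [parabolicChart_of_ne_zero t₀ (inv_ne_zero ht), inv_inv, add_sub_cancel]

theorem tendsto_parabolicChart {α : Type*} {l : Filter α} {u : α → ℝ}
    (hu : Tendsto u l (cobounded ℝ)) (t₀ : ℝ) :
    Tendsto (parabolicChart t₀ ∘ u) l (𝓝 ↑t₀) := by
  have hreal : Tendsto (fun x => t₀ + (u x)⁻¹) l (𝓝 t₀) := by
    simpa using (tendsto_inv₀_cobounded.comp hu).const_add t₀
  refine ((continuous_coe.tendsto t₀).comp hreal).congr' ?_
  filter_upwards [hu.eventually_ne_cobounded 0] with x hx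
  exact (parabolicChart_of_ne_zero t₀ hx).symm

theorem tendsto_add_natCast_mul_cobounded (v : ℝ) {k : ℝ} (hk : k ≠ 0) :
    Tendsto (fun n : ℕ => v + n * k) atTop (cobounded ℝ) :=
  (tendsto_const_add_cobounded v).comp
    ((tendsto_mul_right_cobounded hk).comp tendsto_natCast_atTop_cobounded)

section Parabolic

variable {a b c d : ℝ}

theorem add_ne_zero_of_discr_eq_zero (hdet : a * d - b * c ≠ 0)
    (hΔ : (d - a) ^ 2 + 4 * b * c = 0) : a + d ≠ 0 := by
  intro hs
  apply hdet
  have : d = -a := by linear_combination hs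
  subst this
  linear_combination -hΔ / 4

theorem mobius_coe_fixedPoint (hc : c ≠ 0) (hΔ : (d - a) ^ 2 + 4 * b * c = 0)
    (hs : a + d ≠ 0) :
    mobius a b c d ↑((a - d) / (2 * c)) = ↑((a - d) / (2 * c)) := by
  have hden : c * ((a - d) / (2 * c)) + d = (a + d) / 2 := by field_simp; ring
  have hden0 : c * ((a - d) / (2 * c)) + d ≠ 0 := by
    rw [hden]; exact div_ne_zero hs two_ne_zero
  simp only [mobius, if_neg hden0]
  congr 1
  rw [div_eq_iff hden0]
  field_simp
  linear_combination hΔ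

theorem semiconj_parabolicChart_mobius (hc : c ≠ 0) (hΔ : (d - a) ^ 2 + 4 * b * c = 0)
    (hs : a + d ≠ 0) :
    Semiconj (parabolicChart ((a - d) / (2 * c))) (· + 2 * c / (a + d)) (mobius a b c d) := by
  set t₀ := (a - d) / (2 * c) with ht₀
  set k := 2 * c / (a + d) with hk
  have hk0 : k ≠ 0 := div_ne_zero (mul_ne_zero two_ne_zero hc) hs
  intro v
  show parabolicChart t₀ (v + k) = mobius a b c d (parabolicChart t₀ v)
  by_cases hv : v = 0
  · rw [hv, zero_add, parabolicChart_zero, parabolicChart_of_ne_zero _ hk0]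
    show _ = ((a / c : ℝ) : OnePoint ℝ)
    congr 1
    rw [ht₀, hk]
    field_simp
    ring
  have hden : c * (t₀ + v⁻¹) + d = (a + d) * (v + k) / (2 * v) := by
    rw [ht₀, hk]; field_simp; ring
  rw [parabolicChart_of_ne_zero _ hv]
  by_cases hvk : v + k = 0
  · rw [hvk, parabolicChart_zero]
    simp [mobius, hden, hvk]
  · have hden0 : c * (t₀ + v⁻¹) + d ≠ 0 := by
      rw [hden]; exact div_ne_zero (mul_ne_zero hs hvk) (mul_ne_zero two_ne_zero hv)
    rw [parabolicChart_of_ne_zero _ hvk]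
    simp only [mobius, if_neg hden0]
    congr 1
    rw [eq_div_iff hden0, hden]
    have hvk' : v * (a + d) + 2 * c ≠ 0 := by
      contrapose! hvk; rw [hk]; field_simp; linear_combination hvk
    rw [ht₀, hk]
    field_simp
    linear_combination -v * hΔ

end Parabolic

theorem stmt_1 (a b c d : ℝ) (hc : c ≠ 0) (hdet : a * d - b * c ≠ 0)
    (hΔ : (d - a) ^ 2 + 4 * b * c = 0) :
    (∀ q : OnePoint ℝ, mobius a b c d q = q ↔ q = (((a - d) / (2 * c) : ℝ) : OnePoint ℝ)) ∧
    (∀ q : OnePoint ℝ,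
      Tendsto (fun n : ℕ => (mobius a b c d)^[n] q) atTop
        (nhds (((a - d) / (2 * c) : ℝ) : OnePoint ℝ))) := by
  have hs := add_ne_zero_of_discr_eq_zero hdet hΔ
  have hk : 2 * c / (a + d) ≠ 0 := div_ne_zero (mul_ne_zero two_ne_zero hc) hs
  have hfix := mobius_coe_fixedPoint hc hΔ hs
  have hconj := semiconj_parabolicChart_mobius hc hΔ hs
  refine ⟨fun q => ⟨fun hq => ?_, fun hq => hq ▸ hfix⟩, fun q => ?_⟩
  · by_contra hne
    obtain ⟨v, rfl⟩ := exists_parabolicChart_eq hne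
    rw [← hconj v] at hq
    exact hk (by simpa using parabolicChart_injective _ hq)
  · by_cases hq : q = ↑((a - d) / (2 * c))
    · simp [hq, iterate_fixed hfix]
    obtain ⟨v, rfl⟩ := exists_parabolicChart_eq hq
    refine (tendsto_parabolicChart (tendsto_add_natCast_mul_cobounded v hk) _).congr fun n => ?_
    rw [comp_apply, ← (hconj.iterate_right n) v, add_right_iterate_apply, nsmul_eq_mul]
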